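/- arXiv:2303.05168 — 4 statements merged into one kernel-verified Lean document; each statement's English description precedes it below -/
import Mathlib

section
/- Under the same definitions, if φ, ψ : ℤ → ℝ are bounded nondecreasing sequences with φ ≤ ψ pointwise, φ_i = ψ_i = r at index i, then L_h[φ]_i ≤ L_h[ψ]_i. -/
open Real

noncomputable def discFL (ω φ : ℤ → ℝ) (i : ℤ) : ℝ :=
  ∑' k : {k : ℤ // k ≠ 0}, (φ i - φ (i + k)) * ω k

noncomputable def Dh (h : ℝ) (ω φ : ℤ → ℝ) (i : ℤ) : ℝ :=
  if discFL ω φ i ≤ 0 then (φ (i + 1) - φ i) / h else (φ i - φ (i - 1)) / h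

noncomputable def Lh (h m : ℝ) (ω φ : ℤ → ℝ) (i : ℤ) : ℝ :=
  -|Dh h ω φ i| ^ (m - 1) * discFL ω φ i

noncomputable def Sstep (τ h m : ℝ) (ω φ : ℤ → ℝ) (i : ℤ) : ℝ :=
  φ i - τ * |Dh h ω φ i| ^ (m - 1) * discFL ω φ i

lemma summable_discFL (ω φ : ℤ → ℝ) (i : ℤ) (B : ℝ) (hB : ∀ j, |φ j| ≤ B)
    (hωpos : ∀ k, 0 ≤ ω k)
    (hωsum : Summable (fun k : {k : ℤ // k ≠ 0} => ω k)) :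
    Summable (fun k : {k : ℤ // k ≠ 0} => (φ i - φ (i + k)) * ω k) := by
  apply Summable.of_norm_bounded (g := fun k : {k : ℤ // k ≠ 0} => (2 * B) * ω k)
    (hωsum.mul_left _)
  intro k
  rw [Real.norm_eq_abs, abs_mul, abs_of_nonneg (hωpos k)]
  have h1 := hB i
  have h2 := hB (i + k)
  obtain ⟨a1, a2⟩ := abs_le.1 h1
  obtain ⟨b1, b2⟩ := abs_le.1 h2
  have h3 : |φ i - φ (i + k)| ≤ 2 * B := by
    rw [abs_le]; exact ⟨by linarith, by linarith⟩
  exact mul_le_mul_of_nonneg_right h3 (hωpos k)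

theorem Lh_monotone_in_offdiagonal (h m r : ℝ) (ω φ ψ : ℤ → ℝ) (i : ℤ)
    (hh : 0 < h) (hm : 1 ≤ m)
    (hφbd : ∃ B, ∀ j, |φ j| ≤ B) (hψbd : ∃ B, ∀ j, |ψ j| ≤ B)
    (hφmono : Monotone φ) (hψmono : Monotone ψ)
    (hle : ∀ j, φ j ≤ ψ j)
    (hφi : φ i = r) (hψi : ψ i = r)
    (hωpos : ∀ k, 0 ≤ ω k) (hωsym : ∀ k, ω (-k) = ω k)
    (hωsum : Summable (fun k : {k : ℤ // k ≠ 0} => ω k)) :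
    Lh h m ω φ i ≤ Lh h m ω ψ i := by
  obtain ⟨Bφ, hBφ⟩ := hφbd
  obtain ⟨Bψ, hBψ⟩ := hψbd
  have hsφ := summable_discFL ω φ i Bφ hBφ hωpos hωsum
  have hsψ := summable_discFL ω ψ i Bψ hBψ hωpos hωsum
  have hAB : discFL ω ψ i ≤ discFL ω φ i := by
    apply Summable.tsum_le_tsum _ hsψ hsφ
    intro k
    apply mul_le_mul_of_nonneg_right _ (hωpos k)
    have := hle (i + (k : ℤ))
    rw [hφi, hψi]; linarith
  have hm0 : (0:ℝ) ≤ m - 1 := by linarith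
  by_cases hA : discFL ω φ i ≤ 0
  · have hB : discFL ω ψ i ≤ 0 := le_trans hAB hA
    unfold Lh Dh
    rw [if_pos hA, if_pos hB]
    have h1 : (0:ℝ) ≤ (φ (i+1) - φ i)/h :=
      div_nonneg (sub_nonneg.2 (hφmono (by omega))) hh.le
    have h2 : (φ (i+1) - φ i)/h ≤ (ψ (i+1) - ψ i)/h := by
      have e1 : φ (i+1) ≤ ψ (i+1) := hle (i+1)
      have e2 : ψ i ≤ φ i := by rw [hφi, hψi]
      gcongr
    have habs : |(φ (i+1) - φ i)/h| ≤ |(ψ (i+1) - ψ i)/h| :=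
      abs_le_abs h2 (by linarith)
    have hx : |(φ (i+1) - φ i)/h| ^ (m-1) ≤ |(ψ (i+1) - ψ i)/h| ^ (m-1) :=
      Real.rpow_le_rpow (abs_nonneg _) habs hm0
    have hmul : |(φ (i+1) - φ i)/h| ^ (m-1) * (-(discFL ω φ i)) ≤
        |(ψ (i+1) - ψ i)/h| ^ (m-1) * (-(discFL ω ψ i)) :=
      mul_le_mul hx (by linarith) (by linarith)
        (Real.rpow_nonneg (abs_nonneg _) _)
    nlinarith [hmul]
  · push_neg at hA
    by_cases hB : discFL ω ψ i ≤ 0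
    · unfold Lh Dh
      rw [if_neg (not_le.2 hA), if_pos hB]
      have h1 : (0:ℝ) ≤ |(φ i - φ (i-1))/h| ^ (m-1) :=
        Real.rpow_nonneg (abs_nonneg _) _
      have h2 : (0:ℝ) ≤ |(ψ (i+1) - ψ i)/h| ^ (m-1) :=
        Real.rpow_nonneg (abs_nonneg _) _
      nlinarith
    · push_neg at hB
      unfold Lh Dh
      rw [if_neg (not_le.2 hA), if_neg (not_le.2 hB)]
      have h1 : (0:ℝ) ≤ (ψ i - ψ (i-1))/h :=
        div_nonneg (sub_nonneg.2 (hψmono (by omega))) hh.le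
      have h2 : (ψ i - ψ (i-1))/h ≤ (φ i - φ (i-1))/h := by
        have e1 : φ (i-1) ≤ ψ (i-1) := hle (i-1)
        have e2 : ψ i ≤ φ i := by rw [hφi, hψi]
        gcongr
      have habs : |(ψ i - ψ (i-1))/h| ≤ |(φ i - φ (i-1))/h| :=
        abs_le_abs h2 (by linarith)
      have hx : |(ψ i - ψ (i-1))/h| ^ (m-1) ≤ |(φ i - φ (i-1))/h| ^ (m-1) :=
        Real.rpow_le_rpow (abs_nonneg _) habs hm0
      have hmul : |(ψ i - ψ (i-1))/h| ^ (m-1) * (discFL ω ψ i) ≤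
          |(φ i - φ (i-1))/h| ^ (m-1) * (discFL ω φ i) :=
        mul_le_mul hx hAB hB.le (Real.rpow_nonneg (abs_nonneg _) _)
      nlinarith [hmul]
end

section
/- Let m ≥ 2, M > 0, h > 0, τ > 0, and let ω be nonnegative symmetric weights with ∑_{k≠0} ω_k ≤ C_s h^{-2s}. Define the one-step operator S_τ[φ]_i = φ_i - τ |D_h φ_i|^{m-1} (-Δ)_h^s φ_i with upwind D_h as above. If φ, ψ : ℤ → ℝ are nondecreasing, bounded by M in absolute value, φ ≤ ψ pointwise, and τ ≤ h^{2s+m-1} / (C_s m (2M)^{m-1}), then S_τ[φ]_i ≤ S_τ[ψ]_i for all i. -/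
open Real

lemma rpow_mvt_le {a K x y : ℝ} (ha : 1 ≤ a) (hy : 0 ≤ y) (hyx : y ≤ x) (hxK : x ≤ K) :
    x ^ a - y ^ a ≤ a * K ^ (a - 1) * (x - y) := by
  rcases eq_or_lt_of_le hyx with rfl | hlt
  · simp
  · have hcont : ∀ t : ℝ, HasDerivAt (fun u : ℝ => u ^ a) (a * t ^ (a - 1)) t := fun t =>
      Real.hasDerivAt_rpow_const (Or.inr ha)
    obtain ⟨c, hc, hceq⟩ := exists_hasDerivAt_eq_slope (fun u : ℝ => u ^ a)
      (fun t => a * t ^ (a - 1)) hlt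
      (fun t _ => (hcont t).continuousAt.continuousWithinAt) (fun t _ => hcont t)
    have hxy : 0 < x - y := by linarith
    have heq : x ^ a - y ^ a = a * c ^ (a - 1) * (x - y) := by
      rw [hceq]; field_simp
    rw [heq]
    have hc0 : 0 ≤ c := le_trans hy hc.1.le
    have hcK : c ≤ K := le_trans hc.2.le hxK
    have : c ^ (a - 1) ≤ K ^ (a - 1) := Real.rpow_le_rpow hc0 hcK (by linarith)
    have ha0 : 0 ≤ a := by linarith
    exact mul_le_mul_of_nonneg_right (mul_le_mul_of_nonneg_left this ha0) hxy.le

theorem Sstep_comparison (s m M h τ Cs : ℝ) (ω φ ψ : ℤ → ℝ)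
    (hs : 0 < s) (hs1 : s < 1) (hm : 2 ≤ m) (hM : 0 < M) (hh : 0 < h) (hτ : 0 < τ)
    (hCs : 0 < Cs)
    (hωpos : ∀ k, 0 ≤ ω k) (hωsym : ∀ k, ω (-k) = ω k)
    (hωsum : Summable (fun k : {k : ℤ // k ≠ 0} => ω k))
    (hωbd : (∑' k : {k : ℤ // k ≠ 0}, ω k) ≤ Cs * h ^ (-(2 * s)))
    (hφmono : Monotone φ) (hψmono : Monotone ψ)
    (hφbd : ∀ i, |φ i| ≤ M) (hψbd : ∀ i, |ψ i| ≤ M)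
    (hle : ∀ i, φ i ≤ ψ i)
    (hCFL : τ ≤ h ^ (2 * s + m - 1) / (Cs * m * (2 * M) ^ (m - 1))) :
    ∀ i : ℤ, Sstep τ h m ω φ i ≤ Sstep τ h m ω ψ i := by
  intro i
  have ha1 : (1:ℝ) ≤ m - 1 := by linarith
  have ha0 : (0:ℝ) ≤ m - 1 := by linarith
  have hM2 : (0:ℝ) < 2 * M := by linarith
  set W : ℝ := ∑' k : {k : ℤ // k ≠ 0}, ω k with hWdef
  have hWnn : 0 ≤ W := tsum_nonneg fun k => hωpos k
  clear_value W
  set Δ : ℝ := ψ i - φ i with hΔdef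
  have hΔnn : 0 ≤ Δ := sub_nonneg.mpr (hle i)
  clear_value Δ
  -- summability of the discFL series
  have sumgen : ∀ (χ : ℤ → ℝ), (∀ j, |χ j| ≤ M) →
      Summable (fun k : {k : ℤ // k ≠ 0} => (χ i - χ (i + k)) * ω k) := by
    intro χ hχ
    apply Summable.of_norm_bounded (hωsum.mul_left (2 * M))
    intro k
    rw [norm_mul, Real.norm_eq_abs, Real.norm_eq_abs, abs_of_nonneg (hωpos k)]
    have h1 := abs_le.mp (hχ i)
    have h2 := abs_le.mp (hχ (i + k))
    have : |χ i - χ (i + k)| ≤ 2 * M := abs_le.mpr ⟨by linarith [h1.1, h2.2], by linarith [h1.2, h2.1]⟩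
    exact mul_le_mul_of_nonneg_right this (hωpos k)
  have sumA := sumgen φ hφbd
  have sumB := sumgen ψ hψbd
  -- |discFL| ≤ 2M W
  have absgen : ∀ (χ : ℤ → ℝ), (∀ j, |χ j| ≤ M) →
      Summable (fun k : {k : ℤ // k ≠ 0} => (χ i - χ (i + k)) * ω k) →
      |discFL ω χ i| ≤ 2 * M * W := by
    intro χ hχ hsum
    have hb : ∀ k : {k : ℤ // k ≠ 0}, |(χ i - χ (i + k)) * ω k| ≤ 2 * M * ω k := by
      intro k
      rw [abs_mul, abs_of_nonneg (hωpos k)]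
      have h1 := abs_le.mp (hχ i)
      have h2 := abs_le.mp (hχ (i + k))
      have : |χ i - χ (i + k)| ≤ 2 * M := abs_le.mpr ⟨by linarith [h1.1, h2.2], by linarith [h1.2, h2.1]⟩
      exact mul_le_mul_of_nonneg_right this (hωpos k)
    rw [abs_le]
    constructor
    · have : (-(2 * M)) * W = ∑' k : {k : ℤ // k ≠ 0}, (-(2 * M)) * ω k := by
        rw [hWdef]; exact (tsum_mul_left).symm
      rw [show -(2 * M * W) = (-(2 * M)) * W by ring, this]
      apply Summable.tsum_le_tsum _ ((hωsum.mul_left _)) hsum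
      intro k
      have := abs_le.mp (hb k)
      linarith [this.1]
    · have : 2 * M * W = ∑' k : {k : ℤ // k ≠ 0}, 2 * M * ω k := by
        rw [hWdef]; exact (tsum_mul_left).symm
      rw [this]
      apply Summable.tsum_le_tsum _ hsum (hωsum.mul_left _)
      intro k
      have := abs_le.mp (hb k)
      linarith [this.2]
  have habsA : |discFL ω φ i| ≤ 2 * M * W := absgen φ hφbd sumA
  have habsB : |discFL ω ψ i| ≤ 2 * M * W := absgen ψ hψbd sumB
  -- B - A ≤ Δ W
  have hBA : discFL ω ψ i - discFL ω φ i ≤ Δ * W := by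
    have hsub : discFL ω ψ i - discFL ω φ i
        = ∑' k : {k : ℤ // k ≠ 0}, ((ψ i - ψ (i + k)) * ω k - (φ i - φ (i + k)) * ω k) := by
      rw [Summable.tsum_sub sumB sumA]; rfl
    rw [hsub, show Δ * W = ∑' k : {k : ℤ // k ≠ 0}, Δ * ω k by rw [hWdef]; exact (tsum_mul_left).symm]
    apply Summable.tsum_le_tsum _ (sumB.sub sumA) (hωsum.mul_left _)
    intro k
    have h1 : φ (i + k) ≤ ψ (i + k) := hle _
    have h2 := hωpos k
    nlinarith [h2, h1]
  -- one-sided difference quotients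
  set K : ℝ := 2 * M / h with hKdef
  clear_value K
  have hK : 0 < K := by rw [hKdef]; exact div_pos hM2 hh
  have diffb : ∀ (χ : ℤ → ℝ), Monotone χ → (∀ j, |χ j| ≤ M) → ∀ j l : ℤ, j ≤ l →
      0 ≤ (χ l - χ j) / h ∧ (χ l - χ j) / h ≤ K := by
    intro χ hmono hbd j l hjl
    constructor
    · exact div_nonneg (sub_nonneg.mpr (hmono hjl)) hh.le
    · rw [hKdef]
      have h1 := abs_le.mp (hbd j)
      have h2 := abs_le.mp (hbd l)
      have : χ l - χ j ≤ 2 * M := by linarith [h1.1, h2.2]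
      gcongr
  have hp1 := diffb φ hφmono hφbd i (i+1) (by omega)
  have hp0 := diffb φ hφmono hφbd (i-1) i (by omega)
  have hq1 := diffb ψ hψmono hψbd i (i+1) (by omega)
  have hq0 := diffb ψ hψmono hψbd (i-1) i (by omega)
  -- CFL arithmetic reduction
  have hP : (0:ℝ) < (2*M) ^ (m-1) := Real.rpow_pos_of_pos hM2 _
  have hD : 0 < Cs * m * (2*M) ^ (m-1) := mul_pos (mul_pos hCs (by linarith)) hP
  have hcfl' : τ * (Cs * m * (2*M) ^ (m-1)) ≤ h ^ (2*s+m-1) := (le_div_iff₀ hD).mp hCFL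
  have hsplitpow : h ^ (2*s+m-1) = h ^ (2*s) * h ^ (m-1) := by
    rw [show 2*s+m-1 = 2*s + (m-1) by ring, Real.rpow_add hh]
  have hH2s : (0:ℝ) < h ^ (2*s) := Real.rpow_pos_of_pos hh _
  have hHm1 : (0:ℝ) < h ^ (m-1) := Real.rpow_pos_of_pos hh _
  have hWb : W ≤ Cs / h ^ (2*s) := by
    rw [Real.rpow_neg hh.le] at hωbd
    rw [div_eq_mul_inv]
    exact hωbd
  have hKpow : K ^ (m-1) = (2*M) ^ (m-1) / h ^ (m-1) := by
    rw [hKdef, Real.div_rpow hM2.le hh.le]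
  have hKpnn : (0:ℝ) ≤ K ^ (m-1) := Real.rpow_nonneg hK.le _
  have hΔW : (0:ℝ) ≤ Δ * W := mul_nonneg hΔnn hWnn
  have final : ∀ X Y : ℝ, Y - X ≤ m * (K ^ (m-1) * (Δ * W)) →
      φ i - τ * X ≤ ψ i - τ * Y := by
    intro X Y hXY
    have h1 : τ * (Y - X) ≤ τ * (m * (K ^ (m-1) * (Δ * W))) :=
      mul_le_mul_of_nonneg_left hXY hτ.le
    have h2 : τ * (m * (K ^ (m-1) * (Δ * W))) ≤ Δ := by
      have t1 : τ * (m * (K ^ (m-1) * (Δ * W))) ≤ τ * (m * (K ^ (m-1) * (Δ * (Cs / h ^ (2*s))))) := by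
        apply mul_le_mul_of_nonneg_left _ hτ.le
        apply mul_le_mul_of_nonneg_left _ (by linarith : (0:ℝ) ≤ m)
        apply mul_le_mul_of_nonneg_left _ hKpnn
        exact mul_le_mul_of_nonneg_left hWb hΔnn
      have hfrac : τ * (Cs * m * (2*M) ^ (m-1)) / (h ^ (2*s) * h ^ (m-1)) ≤ 1 := by
        rw [div_le_one (mul_pos hH2s hHm1), ← hsplitpow]
        exact hcfl'
      have t2 : τ * (m * (K ^ (m-1) * (Δ * (Cs / h ^ (2*s))))) ≤ Δ := by
        have heq : τ * (m * (K ^ (m-1) * (Δ * (Cs / h ^ (2*s)))))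
            = Δ * (τ * (Cs * m * (2*M) ^ (m-1)) / (h ^ (2*s) * h ^ (m-1))) := by
          rw [hKpow]
          field_simp
        rw [heq]
        calc Δ * (τ * (Cs * m * (2*M) ^ (m-1)) / (h ^ (2*s) * h ^ (m-1)))
            ≤ Δ * 1 := mul_le_mul_of_nonneg_left hfrac hΔnn
          _ = Δ := mul_one Δ
      exact le_trans t1 t2
    have hΔ' : Δ = ψ i - φ i := hΔdef
    linarith
  have hKK : K ^ (m-1-1) * K = K ^ (m-1) := by
    rw [← Real.rpow_add_one hK.ne' (m-1-1), show m-1-1+1 = m-1 by ring]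
  simp only [Sstep, Dh]
  set A := discFL ω φ i with hAdef
  set B := discFL ω ψ i with hBdef
  clear_value A B
  have habsA' := abs_le.mp habsA
  have habsB' := abs_le.mp habsB
  rcases le_or_gt A 0 with hA | hA <;> rcases le_or_gt B 0 with hB | hB
  · -- A ≤ 0, B ≤ 0 : both forward
    rw [if_pos hA, if_pos hB, abs_of_nonneg hp1.1, abs_of_nonneg hq1.1]
    rw [mul_assoc, mul_assoc]
    apply final
    set p := (φ (i+1) - φ i) / h with hpdef
    set q := (ψ (i+1) - ψ i) / h with hqdef
    have t1 : q ^ (m-1) * (B - A) ≤ K ^ (m-1) * (Δ * W) :=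
      calc q ^ (m-1) * (B - A) ≤ q ^ (m-1) * (Δ * W) :=
            mul_le_mul_of_nonneg_left hBA (Real.rpow_nonneg hq1.1 _)
        _ ≤ K ^ (m-1) * (Δ * W) :=
            mul_le_mul_of_nonneg_right (Real.rpow_le_rpow hq1.1 hq1.2 ha0) hΔW
    have t2 : (q ^ (m-1) - p ^ (m-1)) * A ≤ (m-1) * (K ^ (m-1) * (Δ * W)) := by
      rcases le_or_gt p q with hpq | hpq
      · have h1 : (0:ℝ) ≤ q ^ (m-1) - p ^ (m-1) :=
          sub_nonneg.mpr (Real.rpow_le_rpow hp1.1 hpq ha0)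
        have h2 : (q ^ (m-1) - p ^ (m-1)) * A ≤ 0 := mul_nonpos_of_nonneg_of_nonpos h1 hA
        have h3 : (0:ℝ) ≤ (m-1) * (K ^ (m-1) * (Δ * W)) :=
          mul_nonneg (by linarith) (mul_nonneg hKpnn hΔW)
        linarith
      · have hmvt : p ^ (m-1) - q ^ (m-1) ≤ (m-1) * K ^ (m-1-1) * (p - q) :=
          rpow_mvt_le ha1 hq1.1 hpq.le hp1.2
        have hdiff : p - q ≤ Δ / h := by
          have hnum : (φ (i+1) - φ i) - (ψ (i+1) - ψ i) ≤ Δ := by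
            have := hle (i+1); rw [hΔdef]; linarith
          have hpq' : p - q = ((φ (i+1) - φ i) - (ψ (i+1) - ψ i)) / h := by
            rw [hpdef, hqdef]; ring
          rw [hpq']
          exact (div_le_div_iff_of_pos_right hh).mpr hnum
        have hmA : -A ≤ 2*M*W := by linarith [habsA'.1]
        have hmA0 : (0:ℝ) ≤ -A := by linarith
        have hmvtnn : (0:ℝ) ≤ (m-1) * K ^ (m-1-1) * (p - q) :=
          mul_nonneg (mul_nonneg (by linarith) (Real.rpow_nonneg hK.le _)) (by linarith)
        calc (q ^ (m-1) - p ^ (m-1)) * A = (p ^ (m-1) - q ^ (m-1)) * (-A) := by ring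
          _ ≤ ((m-1) * K ^ (m-1-1) * (p - q)) * (2*M*W) :=
              mul_le_mul hmvt hmA hmA0 hmvtnn
          _ ≤ ((m-1) * K ^ (m-1-1) * (Δ / h)) * (2*M*W) := by
              apply mul_le_mul_of_nonneg_right _ (mul_nonneg hM2.le hWnn)
              exact mul_le_mul_of_nonneg_left hdiff
                (mul_nonneg (by linarith) (Real.rpow_nonneg hK.le _))
          _ = (m-1) * (K ^ (m-1) * (Δ * W)) := by
              rw [← hKK, hKdef]; field_simp
    have hsum2 : K ^ (m-1) * (Δ * W) + (m-1) * (K ^ (m-1) * (Δ * W))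
        = m * (K ^ (m-1) * (Δ * W)) := by ring
    have hdec : q ^ (m-1) * B - p ^ (m-1) * A
        = q ^ (m-1) * (B - A) + (q ^ (m-1) - p ^ (m-1)) * A := by ring
    linarith
  · -- A ≤ 0 < B : φ forward, ψ backward
    rw [if_pos hA, if_neg (not_le.mpr hB), abs_of_nonneg hp1.1, abs_of_nonneg hq0.1]
    rw [mul_assoc, mul_assoc]
    apply final
    set p := (φ (i+1) - φ i) / h with hpdef
    set q := (ψ i - ψ (i-1)) / h with hqdef
    have t1 : q ^ (m-1) * B ≤ K ^ (m-1) * B :=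
      mul_le_mul_of_nonneg_right (Real.rpow_le_rpow hq0.1 hq0.2 ha0) hB.le
    have t2 : p ^ (m-1) * (-A) ≤ K ^ (m-1) * (-A) :=
      mul_le_mul_of_nonneg_right (Real.rpow_le_rpow hp1.1 hp1.2 ha0) (by linarith)
    have t3 : K ^ (m-1) * (B - A) ≤ K ^ (m-1) * (Δ * W) :=
      mul_le_mul_of_nonneg_left hBA hKpnn
    have t4 : K ^ (m-1) * (Δ * W) ≤ m * (K ^ (m-1) * (Δ * W)) :=
      le_mul_of_one_le_left (mul_nonneg hKpnn hΔW) (by linarith)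
    have t5 : K ^ (m-1) * B + K ^ (m-1) * (-A) = K ^ (m-1) * (B - A) := by ring
    linarith [t1, t2, t3, t4, t5]
  · -- B ≤ 0 < A : φ backward, ψ forward
    rw [if_neg (not_le.mpr hA), if_pos hB, abs_of_nonneg hp0.1, abs_of_nonneg hq1.1]
    rw [mul_assoc, mul_assoc]
    apply final
    have t1 : ((ψ (i+1) - ψ i) / h) ^ (m-1) * B ≤ 0 :=
      mul_nonpos_of_nonneg_of_nonpos (Real.rpow_nonneg hq1.1 _) hB
    have t2 : (0:ℝ) ≤ ((φ i - φ (i-1)) / h) ^ (m-1) * A :=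
      mul_nonneg (Real.rpow_nonneg hp0.1 _) hA.le
    have t3 : (0:ℝ) ≤ m * (K ^ (m-1) * (Δ * W)) :=
      mul_nonneg (by linarith) (mul_nonneg hKpnn hΔW)
    linarith
  · -- 0 < A, 0 < B : both backward
    rw [if_neg (not_le.mpr hA), if_neg (not_le.mpr hB), abs_of_nonneg hp0.1, abs_of_nonneg hq0.1]
    rw [mul_assoc, mul_assoc]
    apply final
    set p := (φ i - φ (i-1)) / h with hpdef
    set q := (ψ i - ψ (i-1)) / h with hqdef
    have t1 : q ^ (m-1) * (B - A) ≤ K ^ (m-1) * (Δ * W) :=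
      calc q ^ (m-1) * (B - A) ≤ q ^ (m-1) * (Δ * W) :=
            mul_le_mul_of_nonneg_left hBA (Real.rpow_nonneg hq0.1 _)
        _ ≤ K ^ (m-1) * (Δ * W) :=
            mul_le_mul_of_nonneg_right (Real.rpow_le_rpow hq0.1 hq0.2 ha0) hΔW
    have t2 : (q ^ (m-1) - p ^ (m-1)) * A ≤ (m-1) * (K ^ (m-1) * (Δ * W)) := by
      rcases le_or_gt q p with hpq | hpq
      · have h1 : q ^ (m-1) - p ^ (m-1) ≤ 0 :=
          sub_nonpos.mpr (Real.rpow_le_rpow hq0.1 hpq ha0)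
        have h2 : (q ^ (m-1) - p ^ (m-1)) * A ≤ 0 := mul_nonpos_of_nonpos_of_nonneg h1 hA.le
        have h3 : (0:ℝ) ≤ (m-1) * (K ^ (m-1) * (Δ * W)) :=
          mul_nonneg (by linarith) (mul_nonneg hKpnn hΔW)
        linarith
      · have hmvt : q ^ (m-1) - p ^ (m-1) ≤ (m-1) * K ^ (m-1-1) * (q - p) :=
          rpow_mvt_le ha1 hp0.1 hpq.le hq0.2
        have hdiff : q - p ≤ Δ / h := by
          have hnum : (ψ i - ψ (i-1)) - (φ i - φ (i-1)) ≤ Δ := by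
            have := hle (i-1); rw [hΔdef]; linarith
          have hpq' : q - p = ((ψ i - ψ (i-1)) - (φ i - φ (i-1))) / h := by
            rw [hpdef, hqdef]; ring
          rw [hpq']
          exact (div_le_div_iff_of_pos_right hh).mpr hnum
        have hA2 : A ≤ 2*M*W := habsA'.2
        have hmvtnn : (0:ℝ) ≤ (m-1) * K ^ (m-1-1) * (q - p) :=
          mul_nonneg (mul_nonneg (by linarith) (Real.rpow_nonneg hK.le _)) (by linarith)
        calc (q ^ (m-1) - p ^ (m-1)) * A
            ≤ ((m-1) * K ^ (m-1-1) * (q - p)) * (2*M*W) :=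
              mul_le_mul hmvt hA2 hA.le hmvtnn
          _ ≤ ((m-1) * K ^ (m-1-1) * (Δ / h)) * (2*M*W) := by
              apply mul_le_mul_of_nonneg_right _ (mul_nonneg hM2.le hWnn)
              exact mul_le_mul_of_nonneg_left hdiff
                (mul_nonneg (by linarith) (Real.rpow_nonneg hK.le _))
          _ = (m-1) * (K ^ (m-1) * (Δ * W)) := by
              rw [← hKK, hKdef]; field_simp
    have hsum2 : K ^ (m-1) * (Δ * W) + (m-1) * (K ^ (m-1) * (Δ * W))
        = m * (K ^ (m-1) * (Δ * W)) := by ring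
    have hdec : q ^ (m-1) * B - p ^ (m-1) * A
        = q ^ (m-1) * (B - A) + (q ^ (m-1) - p ^ (m-1)) * A := by ring
    linarith
end

section
/- Under the same assumptions, if V^0, W^0 : ℤ → ℝ are nondecreasing, bounded by M, and satisfy V^0 ≤ W^0 pointwise, then the iterates satisfy V^j ≤ W^j pointwise for all j ∈ ℕ. -/
open Real

lemma sc_rpow_lip {p B x y : ℝ} (hp : 1 ≤ p) (hy : 0 ≤ y) (hxy : y ≤ x) (hxB : x ≤ B) :
    x ^ p - y ^ p ≤ p * B ^ (p - 1) * (x - y) := by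
  rcases eq_or_lt_of_le hxy with rfl | hlt
  · simp
  · have hcont : ContinuousOn (fun t : ℝ => t ^ p) (Set.Icc y x) := by
      apply Continuous.continuousOn
      rw [continuous_iff_continuousAt]
      intro t
      exact Real.continuousAt_rpow_const t p (Or.inr (by linarith))
    have hderiv : ∀ t ∈ Set.Ioo y x, HasDerivAt (fun t : ℝ => t ^ p) (p * t ^ (p - 1)) t :=
      fun t _ => Real.hasDerivAt_rpow_const (Or.inr hp)
    obtain ⟨c, hc, hceq⟩ := exists_hasDerivAt_eq_slope (fun t : ℝ => t ^ p) _ hlt hcont hderiv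
    have hc0 : 0 ≤ c := le_of_lt (lt_of_le_of_lt hy hc.1)
    have hcB : c ≤ B := le_trans (le_of_lt hc.2) hxB
    have hxy0 : x - y ≠ 0 := by linarith
    have h1 : x ^ p - y ^ p = p * c ^ (p - 1) * (x - y) := by
      have := hceq
      field_simp at this
      linarith [this]
    have h2 : c ^ (p - 1) ≤ B ^ (p - 1) := Real.rpow_le_rpow hc0 hcB (by linarith)
    rw [h1]
    have h3 : c ^ (p - 1) * (x - y) ≤ B ^ (p - 1) * (x - y) :=
      mul_le_mul_of_nonneg_right h2 (by linarith)
    nlinarith [mul_le_mul_of_nonneg_left h3 (by linarith : (0:ℝ) ≤ p)]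

lemma sc_key2 (p B K h δ e X Y L : ℝ) (hp : 1 ≤ p) (hB : 0 < B) (hh : 0 < h)
    (hK : 0 ≤ K) (hδ : 0 ≤ δ) (hX0 : 0 ≤ X) (hXB : X ≤ B) (hY0 : 0 ≤ Y)
    (hd : X - Y ≤ δ / h) (hL0 : 0 ≤ L) (hLe : L ≤ e)
    (hce : B ^ (p - 1) * e = B ^ p * K * h) :
    (X ^ p - Y ^ p) * L ≤ p * (B ^ p * K) * δ := by
  have hBp0 : 0 ≤ B ^ p := Real.rpow_nonneg hB.le p
  have hRHS : 0 ≤ p * (B ^ p * K) * δ :=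
    mul_nonneg (mul_nonneg (by linarith) (mul_nonneg hBp0 hK)) hδ
  rcases le_or_gt X Y with hxy | hxy
  · have h1 : X ^ p ≤ Y ^ p := Real.rpow_le_rpow hX0 hxy (by linarith)
    nlinarith [mul_nonneg (sub_nonneg.mpr h1) hL0]
  · have hlip := sc_rpow_lip hp hY0 hxy.le hXB
    have hpB : 0 ≤ p * B ^ (p - 1) := by
      have := Real.rpow_nonneg hB.le (p - 1); nlinarith
    have h2 : X ^ p - Y ^ p ≤ p * B ^ (p - 1) * (δ / h) :=
      hlip.trans (mul_le_mul_of_nonneg_left hd hpB)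
    have h0 : 0 ≤ X ^ p - Y ^ p :=
      sub_nonneg.mpr (Real.rpow_le_rpow hY0 hxy.le (by linarith))
    have h3 : (X ^ p - Y ^ p) * L ≤ (p * B ^ (p - 1) * (δ / h)) * e := by
      apply mul_le_mul h2 hLe hL0
      positivity
    have h4 : (p * B ^ (p - 1) * (δ / h)) * e = p * (B ^ p * K) * δ := by
      rw [show p * B ^ (p - 1) * (δ / h) * e = p * (B ^ (p - 1) * e) * δ / h by ring, hce]
      field_simp
    linarith

lemma sc_core (p B K h δ e LV LW DV DW : ℝ)
    (hp : 1 ≤ p) (hB : 0 < B) (hh : 0 < h) (hK : 0 ≤ K) (hδ : 0 ≤ δ)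
    (hDV0 : 0 ≤ DV) (hDVB : DV ≤ B) (hDW0 : 0 ≤ DW) (hDWB : DW ≤ B)
    (hLVe : |LV| ≤ e) (hLWe : |LW| ≤ e)
    (hsub : LW - LV ≤ δ * K)
    (hce : B ^ (p - 1) * e = B ^ p * K * h)
    (hfwd : LW ≤ 0 → LV ≤ 0 → DV - DW ≤ δ / h)
    (hbwd : 0 < LW → 0 < LV → DW - DV ≤ δ / h) :
    DW ^ p * LW - DV ^ p * LV ≤ δ * ((p + 1) * (B ^ p * K)) := by
  have hBp0 : 0 ≤ B ^ p := Real.rpow_nonneg hB.le p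
  have hDVp0 : 0 ≤ DV ^ p := Real.rpow_nonneg hDV0 p
  have hDWp0 : 0 ≤ DW ^ p := Real.rpow_nonneg hDW0 p
  have hDVpB : DV ^ p ≤ B ^ p := Real.rpow_le_rpow hDV0 hDVB (by linarith)
  have hDWpB : DW ^ p ≤ B ^ p := Real.rpow_le_rpow hDW0 hDWB (by linarith)
  have hδK : 0 ≤ δ * K := mul_nonneg hδ hK
  have hRHS0 : 0 ≤ δ * ((p + 1) * (B ^ p * K)) :=
    mul_nonneg hδ (mul_nonneg (by linarith) (mul_nonneg hBp0 hK))
  have key1 : DV ^ p * (LW - LV) ≤ B ^ p * (δ * K) := by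
    rcases le_or_gt (LW - LV) 0 with hc | hc
    · have : DV ^ p * (LW - LV) ≤ 0 := mul_nonpos_of_nonneg_of_nonpos hDVp0 hc
      nlinarith [mul_nonneg hBp0 hδK]
    · calc DV ^ p * (LW - LV) ≤ B ^ p * (LW - LV) :=
            mul_le_mul_of_nonneg_right hDVpB hc.le
        _ ≤ B ^ p * (δ * K) := mul_le_mul_of_nonneg_left hsub hBp0
  rcases le_or_gt LW 0 with hLW0 | hLW0 <;> rcases le_or_gt LV 0 with hLV0 | hLV0
  · -- both ≤ 0, forward differences
    have hd := hfwd hLW0 hLV0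
    have key2 : (DV ^ p - DW ^ p) * (-LW) ≤ p * (B ^ p * K) * δ := by
      apply sc_key2 p B K h δ e DV DW (-LW) hp hB hh hK hδ hDV0 hDVB hDW0 hd
        (by linarith) (by rw [abs_le] at hLWe; linarith) hce
    nlinarith [key1, key2]
  · -- LW ≤ 0 < LV
    have h1 : DW ^ p * LW ≤ 0 := mul_nonpos_of_nonneg_of_nonpos hDWp0 hLW0
    have h2 : 0 ≤ DV ^ p * LV := mul_nonneg hDVp0 hLV0.le
    linarith
  · -- LV ≤ 0 < LW
    have h1 : LW ≤ δ * K := by linarith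
    have h2 : -LV ≤ δ * K := by linarith
    have h3 : DW ^ p * LW ≤ B ^ p * (δ * K) := mul_le_mul hDWpB h1 hLW0.le hBp0
    have h4 : DV ^ p * (-LV) ≤ B ^ p * (δ * K) := mul_le_mul hDVpB h2 (by linarith) hBp0
    nlinarith [mul_nonneg hBp0 hδK]
  · -- both > 0, backward differences
    have hd := hbwd hLW0 hLV0
    have key2 : (DW ^ p - DV ^ p) * LW ≤ p * (B ^ p * K) * δ := by
      apply sc_key2 p B K h δ e DW DV LW hp hB hh hK hδ hDW0 hDWB hDV0 hd
        hLW0.le (by rw [abs_le] at hLWe; linarith) hce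
    nlinarith [key1, key2]


lemma sc_diff_bd {M : ℝ} {φ : ℤ → ℝ} (hbd : ∀ i, |φ i| ≤ M) (i j : ℤ) :
    |φ i - φ j| ≤ 2 * M := by
  have h1 := abs_le.mp (hbd i)
  have h2 := abs_le.mp (hbd j)
  rw [abs_le]; constructor <;> linarith

lemma sc_summable {M : ℝ} {ω φ : ℤ → ℝ} (hωpos : ∀ k, 0 ≤ ω k)
    (hωsum : Summable (fun k : {k : ℤ // k ≠ 0} => ω k)) (hbd : ∀ i, |φ i| ≤ M) (i : ℤ) :
    Summable (fun k : {k : ℤ // k ≠ 0} => (φ i - φ (i + k)) * ω k) := by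
  apply Summable.of_abs
  apply Summable.of_nonneg_of_le (fun k => abs_nonneg _) ?_ (hωsum.mul_left (2 * M))
  intro k
  rw [abs_mul, abs_of_nonneg (hωpos k)]
  exact mul_le_mul_of_nonneg_right (sc_diff_bd hbd i (i + k)) (hωpos k)

lemma sc_discFL_bd {M : ℝ} {ω φ : ℤ → ℝ} (hωpos : ∀ k, 0 ≤ ω k)
    (hωsum : Summable (fun k : {k : ℤ // k ≠ 0} => ω k)) (hbd : ∀ i, |φ i| ≤ M) (i : ℤ) :
    |discFL ω φ i| ≤ 2 * M * (∑' k : {k : ℤ // k ≠ 0}, ω k) := by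
  have hsum := sc_summable hωpos hωsum hbd i
  rw [abs_le, discFL]
  constructor
  · rw [show -(2 * M * (∑' k : {k : ℤ // k ≠ 0}, ω k)) =
        ∑' k : {k : ℤ // k ≠ 0}, -(2 * M) * ω k by rw [tsum_mul_left]; ring]
    apply Summable.tsum_le_tsum _ (hωsum.mul_left _) hsum
    intro k
    have := abs_le.mp (sc_diff_bd hbd i (i + k))
    nlinarith [hωpos k, this.1]
  · rw [show 2 * M * (∑' k : {k : ℤ // k ≠ 0}, ω k) =
        ∑' k : {k : ℤ // k ≠ 0}, (2 * M) * ω k by rw [tsum_mul_left]]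
    apply Summable.tsum_le_tsum _ hsum (hωsum.mul_left _)
    intro k
    have := abs_le.mp (sc_diff_bd hbd i (i + k))
    nlinarith [hωpos k, this.2]

lemma sc_discFL_sub {M : ℝ} {ω V W : ℤ → ℝ} (hωpos : ∀ k, 0 ≤ ω k)
    (hωsum : Summable (fun k : {k : ℤ // k ≠ 0} => ω k))
    (hVbd : ∀ i, |V i| ≤ M) (hWbd : ∀ i, |W i| ≤ M)
    (hVW : ∀ i, V i ≤ W i) (i : ℤ) :
    discFL ω W i - discFL ω V i ≤ (W i - V i) * (∑' k : {k : ℤ // k ≠ 0}, ω k) := by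
  have hsumV := sc_summable hωpos hωsum hVbd i
  have hsumW := sc_summable hωpos hωsum hWbd i
  rw [discFL, discFL, ← Summable.tsum_sub hsumW hsumV]
  rw [show (W i - V i) * (∑' k : {k : ℤ // k ≠ 0}, ω k) =
      ∑' k : {k : ℤ // k ≠ 0}, (W i - V i) * ω k by rw [tsum_mul_left]]
  apply Summable.tsum_le_tsum _ (hsumW.sub hsumV) (hωsum.mul_left _)
  intro k
  have h1 := hVW (i + k)
  have h2 := hωpos k
  nlinarith

lemma sc_Dh_bd {M h : ℝ} {ω φ : ℤ → ℝ} (hh : 0 < h) (hmono : Monotone φ)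
    (hbd : ∀ i, |φ i| ≤ M) (i : ℤ) :
    0 ≤ Dh h ω φ i ∧ Dh h ω φ i ≤ 2 * M / h := by
  rw [Dh]
  split
  · constructor
    · apply div_nonneg _ hh.le
      have := hmono (show i ≤ i + 1 by omega); linarith
    · have h1 := abs_le.mp (sc_diff_bd hbd (i + 1) i)
      gcongr
      linarith [h1.2]
  · constructor
    · apply div_nonneg _ hh.le
      have := hmono (show i - 1 ≤ i by omega); linarith
    · have h1 := abs_le.mp (sc_diff_bd hbd i (i - 1))
      gcongr
      linarith [h1.2]

lemma sc_discFL_shift (ω φ : ℤ → ℝ) (i : ℤ) :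
    discFL ω (fun j => φ (j + 1)) i = discFL ω φ (i + 1) := by
  rw [discFL, discFL]
  congr 1
  funext k
  rw [show i + (k : ℤ) + 1 = i + 1 + k by ring]

lemma sc_Dh_shift (h : ℝ) (ω φ : ℤ → ℝ) (i : ℤ) :
    Dh h ω (fun j => φ (j + 1)) i = Dh h ω φ (i + 1) := by
  rw [Dh, Dh, sc_discFL_shift]
  split
  · rw [show i + 1 + 1 = i + 1 + 1 by ring]
  · rw [show i - 1 + 1 = i + 1 - 1 by ring]

lemma sc_Sstep_shift (τ h m : ℝ) (ω φ : ℤ → ℝ) (i : ℤ) :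
    Sstep τ h m ω (fun j => φ (j + 1)) i = Sstep τ h m ω φ (i + 1) := by
  rw [Sstep, Sstep, sc_discFL_shift, sc_Dh_shift]

lemma sc_discFL_const (ω : ℤ → ℝ) (c : ℝ) (i : ℤ) : discFL ω (fun _ => c) i = 0 := by
  rw [discFL]; simp

lemma sc_Sstep_const (τ h m : ℝ) (ω : ℤ → ℝ) (c : ℝ) (i : ℤ) :
    Sstep τ h m ω (fun _ => c) i = c := by
  rw [Sstep, sc_discFL_const]; ring

lemma sc_step_mono (s m M h τ Cs : ℝ) (ω : ℤ → ℝ) (V W : ℤ → ℝ)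
    (hm : 2 ≤ m) (hM : 0 < M) (hh : 0 < h) (hτ : 0 ≤ τ) (hCs : 0 < Cs)
    (hωpos : ∀ k, 0 ≤ ω k)
    (hωsum : Summable (fun k : {k : ℤ // k ≠ 0} => ω k))
    (hωbd : (∑' k : {k : ℤ // k ≠ 0}, ω k) ≤ Cs * h ^ (-(2 * s)))
    (hCFL : τ ≤ h ^ (2 * s + m - 1) / (Cs * m * (2 * M) ^ (m - 1)))
    (hVmono : Monotone V) (hVbd : ∀ i, |V i| ≤ M)
    (hWmono : Monotone W) (hWbd : ∀ i, |W i| ≤ M)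
    (hVW : ∀ i, V i ≤ W i) (i : ℤ) :
    Sstep τ h m ω V i ≤ Sstep τ h m ω W i := by
  have h2M : (0:ℝ) < 2 * M := by linarith
  set K : ℝ := Cs * h ^ (-(2 * s)) with hKdef
  set B : ℝ := 2 * M / h with hBdef
  have hB : 0 < B := by positivity
  have hK : 0 < K := by positivity
  set p : ℝ := m - 1 with hpdef
  have hp : 1 ≤ p := by rw [hpdef]; linarith
  set Sω : ℝ := ∑' k : {k : ℤ // k ≠ 0}, ω k with hSωdef
  have hSω0 : 0 ≤ Sω := tsum_nonneg (fun k => hωpos k)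
  have hSωK : Sω ≤ K := hωbd
  set δ : ℝ := W i - V i with hδdef
  have hδ : 0 ≤ δ := by rw [hδdef]; linarith [hVW i]
  set e : ℝ := 2 * M * K with hedef
  -- CFL key inequality
  have hBp : B ^ p = (2 * M) ^ p / h ^ p := Real.div_rpow h2M.le hh.le p
  have hden : 0 < Cs * m * (2 * M) ^ (m - 1) := by
    have : (0:ℝ) < (2 * M) ^ (m - 1) := Real.rpow_pos_of_pos h2M _
    have hm0 : (0:ℝ) < m := by linarith
    positivity
  have hA : τ * (Cs * m * (2 * M) ^ p) ≤ h ^ (2 * s) * h ^ p := by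
    have h1 := (le_div_iff₀ hden).mp hCFL
    have h2 : h ^ (2 * s + m - 1) = h ^ (2 * s) * h ^ p := by
      rw [← Real.rpow_add hh, hpdef]; ring_nf
    rw [hpdef]
    linarith [h2 ▸ h1]
  have hBpK : B ^ p * K = (Cs * (2 * M) ^ p) / (h ^ p * h ^ (2 * s)) := by
    rw [hBp, hKdef, Real.rpow_neg hh.le]
    field_simp
  have hkey : τ * ((p + 1) * (B ^ p * K)) ≤ 1 := by
    rw [hBpK, show τ * ((p + 1) * (Cs * (2 * M) ^ p / (h ^ p * h ^ (2 * s)))) =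
        (τ * ((p + 1) * (Cs * (2 * M) ^ p))) / (h ^ p * h ^ (2 * s)) by ring]
    rw [div_le_one (by positivity)]
    have : p + 1 = m := by rw [hpdef]; ring
    rw [this]
    calc τ * (m * (Cs * (2 * M) ^ p)) = τ * (Cs * m * (2 * M) ^ p) := by ring
      _ ≤ h ^ (2 * s) * h ^ p := hA
      _ = h ^ p * h ^ (2 * s) := by ring
  -- facts about the scheme quantities
  obtain ⟨hDV0, hDVB⟩ := sc_Dh_bd hh hVmono hVbd i (ω := ω)
  obtain ⟨hDW0, hDWB⟩ := sc_Dh_bd hh hWmono hWbd i (ω := ω)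
  have hLVe : |discFL ω V i| ≤ e := by
    calc |discFL ω V i| ≤ 2 * M * Sω := sc_discFL_bd hωpos hωsum hVbd i
      _ ≤ e := by rw [hedef]; nlinarith
  have hLWe : |discFL ω W i| ≤ e := by
    calc |discFL ω W i| ≤ 2 * M * Sω := sc_discFL_bd hωpos hωsum hWbd i
      _ ≤ e := by rw [hedef]; nlinarith
  have hsub : discFL ω W i - discFL ω V i ≤ δ * K := by
    calc discFL ω W i - discFL ω V i ≤ (W i - V i) * Sω :=
          sc_discFL_sub hωpos hωsum hVbd hWbd hVW i
      _ ≤ δ * K := by rw [hδdef] at *; nlinarith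
  have hce : B ^ (p - 1) * e = B ^ p * K * h := by
    have hBsplit : B ^ p = B ^ (p - 1) * B := by
      rw [show p = (p - 1) + 1 by ring, Real.rpow_add hB, Real.rpow_one]
      ring_nf
    rw [hedef, hBsplit, hBdef]
    field_simp
  have hfwd : discFL ω W i ≤ 0 → discFL ω V i ≤ 0 →
      Dh h ω V i - Dh h ω W i ≤ δ / h := by
    intro hW0 hV0
    rw [Dh, Dh, if_pos hV0, if_pos hW0, div_sub_div_same]
    have := hVW (i + 1)
    rw [hδdef]
    apply (div_le_div_iff_of_pos_right hh).mpr
    linarith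
  have hbwd : 0 < discFL ω W i → 0 < discFL ω V i →
      Dh h ω W i - Dh h ω V i ≤ δ / h := by
    intro hW0 hV0
    rw [Dh, Dh, if_neg (by linarith), if_neg (by linarith), div_sub_div_same]
    have := hVW (i - 1)
    rw [hδdef]
    apply (div_le_div_iff_of_pos_right hh).mpr
    linarith
  have hcore := sc_core p B K h δ e (discFL ω V i) (discFL ω W i)
    (Dh h ω V i) (Dh h ω W i) hp hB hh hK.le hδ hDV0 hDVB hDW0 hDWB
    hLVe hLWe hsub hce hfwd hbwd
  -- conclude
  rw [Sstep, Sstep, abs_of_nonneg hDV0, abs_of_nonneg hDW0]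
  have e1 : τ * (Dh h ω W i ^ p * discFL ω W i - Dh h ω V i ^ p * discFL ω V i) ≤ δ := by
    calc τ * (Dh h ω W i ^ p * discFL ω W i - Dh h ω V i ^ p * discFL ω V i)
        ≤ τ * (δ * ((p + 1) * (B ^ p * K))) := mul_le_mul_of_nonneg_left hcore hτ
      _ = δ * (τ * ((p + 1) * (B ^ p * K))) := by ring
      _ ≤ δ * 1 := mul_le_mul_of_nonneg_left hkey hδ
      _ = δ := mul_one δ
  have hpm : m - 1 = p := by rw [hpdef]
  rw [hpm]
  rw [hδdef] at e1
  linarith [e1]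

lemma sc_step_preserve_mono (s m M h τ Cs : ℝ) (ω : ℤ → ℝ) (φ : ℤ → ℝ)
    (hm : 2 ≤ m) (hM : 0 < M) (hh : 0 < h) (hτ : 0 ≤ τ) (hCs : 0 < Cs)
    (hωpos : ∀ k, 0 ≤ ω k)
    (hωsum : Summable (fun k : {k : ℤ // k ≠ 0} => ω k))
    (hωbd : (∑' k : {k : ℤ // k ≠ 0}, ω k) ≤ Cs * h ^ (-(2 * s)))
    (hCFL : τ ≤ h ^ (2 * s + m - 1) / (Cs * m * (2 * M) ^ (m - 1)))
    (hmono : Monotone φ) (hbd : ∀ i, |φ i| ≤ M) :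
    Monotone (fun i => Sstep τ h m ω φ i) := by
  apply monotone_int_of_le_succ
  intro i
  have hs_mono : Monotone (fun j => φ (j + 1)) := fun a b hab => hmono (by omega)
  have hs_bd : ∀ j, |φ (j + 1)| ≤ M := fun j => hbd _
  have hle : ∀ j, φ j ≤ φ (j + 1) := fun j => hmono (by omega : j ≤ j + 1)
  have h1 := sc_step_mono s m M h τ Cs ω φ (fun j => φ (j + 1)) hm hM hh hτ hCs
    hωpos hωsum hωbd hCFL hmono hbd hs_mono hs_bd hle i
  rwa [sc_Sstep_shift] at h1

lemma sc_step_preserve_bd (s m M h τ Cs : ℝ) (ω : ℤ → ℝ) (φ : ℤ → ℝ)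
    (hm : 2 ≤ m) (hM : 0 < M) (hh : 0 < h) (hτ : 0 ≤ τ) (hCs : 0 < Cs)
    (hωpos : ∀ k, 0 ≤ ω k)
    (hωsum : Summable (fun k : {k : ℤ // k ≠ 0} => ω k))
    (hωbd : (∑' k : {k : ℤ // k ≠ 0}, ω k) ≤ Cs * h ^ (-(2 * s)))
    (hCFL : τ ≤ h ^ (2 * s + m - 1) / (Cs * m * (2 * M) ^ (m - 1)))
    (hmono : Monotone φ) (hbd : ∀ i, |φ i| ≤ M) :
    ∀ i, |Sstep τ h m ω φ i| ≤ M := by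
  intro i
  have hconstM : ∀ j, |(fun _ : ℤ => M) j| ≤ M := fun j => by
    simp [abs_of_pos hM]
  have hconstmM : ∀ j, |(fun _ : ℤ => -M) j| ≤ M := fun j => by
    simp [abs_of_pos hM]
  rw [abs_le]
  constructor
  · have h1 := sc_step_mono s m M h τ Cs ω (fun _ => -M) φ hm hM hh hτ hCs
      hωpos hωsum hωbd hCFL monotone_const hconstmM hmono hbd
      (fun j => by simpa using (abs_le.mp (hbd j)).1) i
    rwa [sc_Sstep_const] at h1
  · have h1 := sc_step_mono s m M h τ Cs ω φ (fun _ => M) hm hM hh hτ hCs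
      hωpos hωsum hωbd hCFL hmono hbd monotone_const hconstM
      (fun j => by simpa using (abs_le.mp (hbd j)).2) i
    rwa [sc_Sstep_const] at h1

theorem scheme_comparison (s m M h τ Cs : ℝ) (ω : ℤ → ℝ) (V W : ℕ → ℤ → ℝ)
    (hs : 0 < s) (hs1 : s < 1) (hm : 2 ≤ m) (hM : 0 < M) (hh : 0 < h) (hτ : 0 < τ)
    (hCs : 0 < Cs)
    (hωpos : ∀ k, 0 ≤ ω k) (hωsym : ∀ k, ω (-k) = ω k)
    (hωsum : Summable (fun k : {k : ℤ // k ≠ 0} => ω k))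
    (hωbd : (∑' k : {k : ℤ // k ≠ 0}, ω k) ≤ Cs * h ^ (-(2 * s)))
    (hCFL : τ ≤ h ^ (2 * s + m - 1) / (Cs * m * (2 * M) ^ (m - 1)))
    (hV0mono : Monotone (V 0)) (hV0bd : ∀ i, |V 0 i| ≤ M)
    (hW0mono : Monotone (W 0)) (hW0bd : ∀ i, |W 0 i| ≤ M)
    (hV0W0 : ∀ i, V 0 i ≤ W 0 i)
    (hiterV : ∀ j i, V (j + 1) i = Sstep τ h m ω (V j) i)
    (hiterW : ∀ j i, W (j + 1) i = Sstep τ h m ω (W j) i) :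
    ∀ (j : ℕ) (i : ℤ), V j i ≤ W j i := by
  have hτ' : 0 ≤ τ := hτ.le
  have key : ∀ j : ℕ, Monotone (V j) ∧ (∀ i, |V j i| ≤ M) ∧
      Monotone (W j) ∧ (∀ i, |W j i| ≤ M) ∧ (∀ i, V j i ≤ W j i) := by
    intro j
    induction j with
    | zero => exact ⟨hV0mono, hV0bd, hW0mono, hW0bd, hV0W0⟩
    | succ j ih =>
      obtain ⟨h1, h2, h3, h4, h5⟩ := ih
      have hVfun : V (j + 1) = fun i => Sstep τ h m ω (V j) i := funext (hiterV j)
      have hWfun : W (j + 1) = fun i => Sstep τ h m ω (W j) i := funext (hiterW j)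
      refine ⟨?_, ?_, ?_, ?_, ?_⟩
      · rw [hVfun]
        exact sc_step_preserve_mono s m M h τ Cs ω (V j) hm hM hh hτ' hCs
          hωpos hωsum hωbd hCFL h1 h2
      · rw [hVfun]
        exact sc_step_preserve_bd s m M h τ Cs ω (V j) hm hM hh hτ' hCs
          hωpos hωsum hωbd hCFL h1 h2
      · rw [hWfun]
        exact sc_step_preserve_mono s m M h τ Cs ω (W j) hm hM hh hτ' hCs
          hωpos hωsum hωbd hCFL h3 h4
      · rw [hWfun]
        exact sc_step_preserve_bd s m M h τ Cs ω (W j) hm hM hh hτ' hCs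
          hωpos hωsum hωbd hCFL h3 h4
      · intro i
        rw [hiterV j i, hiterW j i]
        exact sc_step_mono s m M h τ Cs ω (V j) (W j) hm hM hh hτ' hCs
          hωpos hωsum hωbd hCFL h1 h2 h3 h4 h5 i
  exact fun j i => (key j).2.2.2.2 i
end

section
/- Let V^j : ℤ → ℝ be nondecreasing with 0 ≤ V^j_i ≤ M, lim_{i→-∞} V^j_i = 0 and lim_{i→+∞} V^j_i = M. Assume the weights satisfy ∑_{k≠0} ω_k ≤ C_s h^{-2s}. Then with V^{j+1}_i = V^j_i - τ |D_h V^j_i|^{m-1} (-Δ)_h^s V^j_i (upwind D_h, m ≥ 2), the correction term satisfies lim_{i→±∞} τ |D_h V^j_i|^{m-1} |(-Δ)_h^s V^j_i| = 0, and consequently lim_{i→-∞} V^{j+1}_i = 0 and lim_{i→+∞} V^{j+1}_i = M. -/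
open Real Filter

theorem scheme_limits_at_infinity (s m M h τ Cs : ℝ) (ω : ℤ → ℝ) (V : ℤ → ℝ)
    (hs : 0 < s) (hs1 : s < 1) (hm : 2 ≤ m) (hM : 0 < M) (hh : 0 < h) (hτ : 0 < τ)
    (hCs : 0 < Cs)
    (hωpos : ∀ k, 0 ≤ ω k) (hωsym : ∀ k, ω (-k) = ω k)
    (hωsum : Summable (fun k : {k : ℤ // k ≠ 0} => ω k))
    (hωbd : (∑' k : {k : ℤ // k ≠ 0}, ω k) ≤ Cs * h ^ (-(2 * s)))
    (hVmono : Monotone V) (hVpos : ∀ i, 0 ≤ V i) (hVbd : ∀ i, V i ≤ M)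
    (hbot : Tendsto V atBot (nhds 0)) (htop : Tendsto V atTop (nhds M)) :
    (Tendsto (fun i => τ * |Dh h ω V i| ^ (m - 1) * |discFL ω V i|) atBot (nhds 0)) ∧
    (Tendsto (fun i => τ * |Dh h ω V i| ^ (m - 1) * |discFL ω V i|) atTop (nhds 0)) ∧
    (Tendsto (fun i => Sstep τ h m ω V i) atBot (nhds 0)) ∧
    (Tendsto (fun i => Sstep τ h m ω V i) atTop (nhds M)) := by
  -- bound on |Dh|
  have hDh_nonneg : ∀ i, 0 ≤ Dh h ω V i := by
    intro i
    unfold Dh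
    split
    · exact div_nonneg (sub_nonneg.2 (hVmono (by omega))) hh.le
    · exact div_nonneg (sub_nonneg.2 (hVmono (by omega))) hh.le
  have hDh_le : ∀ i, |Dh h ω V i| ≤ (V (i + 1) - V (i - 1)) / h := by
    intro i
    rw [abs_of_nonneg (hDh_nonneg i)]
    unfold Dh
    split
    · gcongr
      exact hVmono (show i - 1 ≤ i by omega)
    · gcongr
      exact hVmono (show i ≤ i + 1 by omega)
  -- bound on |discFL|
  have hVabs : ∀ i j : ℤ, |V i - V j| ≤ M := by
    intro i j
    rw [abs_sub_le_iff]
    constructor <;> [skip; skip] <;>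
      · have := hVbd i; have := hVpos i; have := hVbd j; have := hVpos j; linarith
  have hsummand : ∀ i (k : {k : ℤ // k ≠ 0}), |(V i - V (i + k)) * ω k| ≤ M * ω k := by
    intro i k
    rw [abs_mul, abs_of_nonneg (hωpos k)]
    exact mul_le_mul_of_nonneg_right (hVabs _ _) (hωpos k)
  have hsum2 : ∀ i, Summable (fun k : {k : ℤ // k ≠ 0} => (V i - V (i + k)) * ω k) := by
    intro i
    apply Summable.of_abs
    exact Summable.of_nonneg_of_le (fun k => abs_nonneg _) (hsummand i) (hωsum.mul_left M)
  set K : ℝ := M * ∑' k : {k : ℤ // k ≠ 0}, ω k with hK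
  have hdisc_le : ∀ i, |discFL ω V i| ≤ K := by
    intro i
    calc |discFL ω V i| ≤ ∑' k : {k : ℤ // k ≠ 0}, |(V i - V (i + k)) * ω k| := by
          unfold discFL
          have hn : Summable (fun k : {k : ℤ // k ≠ 0} => ‖(V i - V (i + k)) * ω k‖) := by
            simp only [Real.norm_eq_abs]
            exact Summable.of_nonneg_of_le (fun k => abs_nonneg _) (hsummand i) (hωsum.mul_left M)
          have := norm_tsum_le_tsum_norm hn
          simp only [Real.norm_eq_abs] at this
          exact this
      _ ≤ ∑' k : {k : ℤ // k ≠ 0}, M * ω k :=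
          Summable.tsum_le_tsum (hsummand i)
            (Summable.of_nonneg_of_le (fun k => abs_nonneg _) (hsummand i) (hωsum.mul_left M))
            (hωsum.mul_left M)
      _ = K := by rw [hK, tsum_mul_left]
  have hK0 : 0 ≤ K := by
    rw [hK]
    exact mul_nonneg hM.le (tsum_nonneg fun k => hωpos k)
  -- limits of Dh at ±∞
  have hshift : ∀ (c : ℤ), Tendsto (fun i : ℤ => i + c) atBot atBot :=
    fun c => tendsto_atBot_add_const_right _ c tendsto_id
  have hshiftT : ∀ (c : ℤ), Tendsto (fun i : ℤ => i + c) atTop atTop :=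
    fun c => tendsto_atTop_add_const_right _ c tendsto_id
  have hDh_bot : Tendsto (fun i => |Dh h ω V i|) atBot (nhds 0) := by
    apply squeeze_zero (fun i => abs_nonneg _) hDh_le
    have h1 : Tendsto (fun i : ℤ => V (i + 1)) atBot (nhds 0) := hbot.comp (hshift 1)
    have h2 : Tendsto (fun i : ℤ => V (i - 1)) atBot (nhds 0) := by
      have := hbot.comp (hshift (-1))
      simpa [sub_eq_add_neg, Function.comp_def] using this
    have := (h1.sub h2).div_const h
    simpa using this
  have hDh_top : Tendsto (fun i => |Dh h ω V i|) atTop (nhds 0) := by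
    apply squeeze_zero (fun i => abs_nonneg _) hDh_le
    have h1 : Tendsto (fun i : ℤ => V (i + 1)) atTop (nhds M) := htop.comp (hshiftT 1)
    have h2 : Tendsto (fun i : ℤ => V (i - 1)) atTop (nhds M) := by
      have := htop.comp (hshiftT (-1))
      simpa [sub_eq_add_neg, Function.comp_def] using this
    have := (h1.sub h2).div_const h
    simpa using this
  have hm1 : m - 1 ≠ 0 := by intro hc; nlinarith
  have hpow_bot : Tendsto (fun i => |Dh h ω V i| ^ (m - 1)) atBot (nhds 0) := by
    have := hDh_bot.rpow_const (p := m - 1) (Or.inr (by linarith))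
    simpa [Real.zero_rpow hm1] using this
  have hpow_top : Tendsto (fun i => |Dh h ω V i| ^ (m - 1)) atTop (nhds 0) := by
    have := hDh_top.rpow_const (p := m - 1) (Or.inr (by linarith))
    simpa [Real.zero_rpow hm1] using this
  have hpow_nonneg : ∀ i, 0 ≤ |Dh h ω V i| ^ (m - 1) := fun i => Real.rpow_nonneg (abs_nonneg _) _
  -- main term tends to 0
  have hmain : ∀ (l : Filter ℤ), Tendsto (fun i => |Dh h ω V i| ^ (m - 1)) l (nhds 0) →
      Tendsto (fun i => τ * |Dh h ω V i| ^ (m - 1) * |discFL ω V i|) l (nhds 0) := by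
    intro l hl
    apply squeeze_zero (fun i => mul_nonneg (mul_nonneg hτ.le (hpow_nonneg i)) (abs_nonneg _))
      (g := fun i => τ * |Dh h ω V i| ^ (m - 1) * K)
    · intro i
      exact mul_le_mul_of_nonneg_left (hdisc_le i) (mul_nonneg hτ.le (hpow_nonneg i))
    · have := ((hl.const_mul τ).mul_const K)
      simpa using this
  have hbotmain := hmain atBot hpow_bot
  have htopmain := hmain atTop hpow_top
  refine ⟨hbotmain, htopmain, ?_, ?_⟩
  · have hterm : Tendsto (fun i => τ * |Dh h ω V i| ^ (m - 1) * discFL ω V i) atBot (nhds 0) := by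
      apply squeeze_zero_norm (fun i => ?_) hbotmain
      rw [Real.norm_eq_abs, abs_mul, abs_of_nonneg (mul_nonneg hτ.le (hpow_nonneg i))]
    have := hbot.sub hterm
    simpa [Sstep] using this
  · have hterm : Tendsto (fun i => τ * |Dh h ω V i| ^ (m - 1) * discFL ω V i) atTop (nhds 0) := by
      apply squeeze_zero_norm (fun i => ?_) htopmain
      rw [Real.norm_eq_abs, abs_mul, abs_of_nonneg (mul_nonneg hτ.le (hpow_nonneg i))]
    have := htop.sub hterm
    simpa [Sstep] using this
end
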